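/- arXiv:1502.04670 — 2 statements merged into one kernel-verified Lean document; each statement's English description precedes it below -/
import Mathlib

section
/- Initial value property (H4): suppose (N : K) ≠ 0 in K. If v = (v_0, …, v_{N−1}) has entries in K and V_k := ∑_{i=0}^{N−1} v_i·cas_k(i), then v_0 = (N : K)⁻¹ · ∑_{k=0}^{N−1} V_k. -/
open scoped BigOperators

/-- The finite field cosine: `cos_k(∠α^i) = (α^{ik} + α^{-ik})/2`,
where `α^{-ik}` denotes `(α⁻¹)^{ik}`. -/
noncomputable def fcos {K : Type*} [Field K] (α : Kˣ) (k i : ℤ) : K :=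
  (((α ^ (i * k) : Kˣ) : K) + ((α⁻¹ ^ (i * k) : Kˣ) : K)) / 2

/-- The finite field sine: `sin_k(∠α^i) = (α^{ik} - α^{-ik})/(2j)`. -/
noncomputable def fsin {K : Type*} [Field K] (α : Kˣ) (j : K) (k i : ℤ) : K :=
  (((α ^ (i * k) : Kˣ) : K) - ((α⁻¹ ^ (i * k) : Kˣ) : K)) / (2 * j)

/-- The finite field `cas` function: `cas_k(∠α^i) = cos_k(∠α^i) + sin_k(∠α^i)`. -/
noncomputable def fcas {K : Type*} [Field K] (α : Kˣ) (j : K) (k i : ℤ) : K :=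
  fcos α k i + fsin α j k i

/-- The finite field Hartley transform of a vector `v` indexed by `ZMod N`:
`V_k = ∑_{i=0}^{N-1} v_i · cas_k(∠α^i)`. -/
noncomputable def ffht {K : Type*} [Field K] (α : Kˣ) (j : K) {N : ℕ} [NeZero N]
    (v : ZMod N → K) (k : ZMod N) : K :=
  ∑ i : ZMod N, v i * fcas α j (k.val : ℤ) (i.val : ℤ)

lemma sum_val_eq_range' {K : Type*} [AddCommMonoid K] (N : ℕ) [NeZero N] (f : ℕ → K) :
    ∑ k : ZMod N, f k.val = ∑ k ∈ Finset.range N, f k := by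
  rw [Finset.sum_nbij' (i := fun (k : ZMod N) => k.val) (j := fun k => (k : ZMod N))]
  · intro a _; exact Finset.mem_range.mpr (ZMod.val_lt a)
  · intro a _; exact Finset.mem_univ _
  · intro a _; exact ZMod.natCast_zmod_val a
  · intro a ha; exact ZMod.val_cast_of_lt (Finset.mem_range.mp ha)
  · intro a _; rfl

lemma sum_pow_val' {K : Type*} [Field K] (β : Kˣ) (N : ℕ) [NeZero N] (hβN : β ^ N = 1)
    [Decidable (β = 1)] :
    ∑ k : ZMod N, ((β : K)) ^ (k.val) = if β = 1 then (N : K) else 0 := by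
  rw [sum_val_eq_range' N (fun k => (β : K) ^ k)]
  by_cases h : β = 1
  · simp [h]
  · rw [if_neg h]
    have hne : (β : K) ≠ 1 := fun hc => h (Units.ext hc)
    rw [geom_sum_eq hne]
    have : (β : K) ^ N = 1 := by
      have := congrArg (Units.val) hβN; push_cast at this; simpa using this
    rw [this]; simp

lemma fcas_eq' {K : Type*} [Field K] (α : Kˣ) (j : K) (hj : j ≠ 0) (h2 : (2:K) ≠ 0)
    (k i : ℤ) :
    fcas α j k i = (1/2 + 1/(2*j)) * ((α ^ (i * k) : Kˣ) : K)
      + (1/2 - 1/(2*j)) * ((α⁻¹ ^ (i * k) : Kˣ) : K) := by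
  unfold fcas fcos fsin
  set A := ((α ^ (i * k) : Kˣ) : K)
  set B := ((α⁻¹ ^ (i * k) : Kˣ) : K)
  field_simp
  ring


/-- H4, initial value: if `(N : K) ≠ 0` and `V` is the FFHT of `v`, then
`v_0 = N⁻¹ · ∑_{k=0}^{N-1} V_k`. -/
theorem ffht_initial_value (p : ℕ) (hp : p.Prime) (hpodd : Odd p)
    (K : Type*) [Field K] [CharP K p] (j : K) (hj : j ^ 2 = -1)
    (α : Kˣ) (N : ℕ) [NeZero N] (hα : orderOf α = N) (hNK : (N : K) ≠ 0)
    (v V : ZMod N → K) (hV : ∀ k, V k = ffht α j v k) :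
    v 0 = (N : K)⁻¹ * ∑ k : ZMod N, V k := by
  classical
  have hp2 : p ≠ 2 := by rintro rfl; rcases hpodd with ⟨m, hm⟩; omega
  have h2 : (2:K) ≠ 0 := by
    intro h
    have hd : (p:ℕ) ∣ 2 := (CharP.cast_eq_zero_iff K p 2).mp (by exact_mod_cast h)
    exact hp2 ((Nat.prime_dvd_prime_iff_eq hp Nat.prime_two).mp hd)
  have hj0 : j ≠ 0 := by intro h; rw [h] at hj; simp at hj
  have hαN : α ^ N = 1 := by rw [← hα]; exact pow_orderOf_eq_one α
  have hsum : ∀ i : ZMod N,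
      ∑ k : ZMod N, fcas α j (k.val : ℤ) (i.val : ℤ) = if i = 0 then (N:K) else 0 := by
    intro i
    set β : Kˣ := α ^ i.val with hβ
    have hexp : ∀ k : ZMod N,
        (α ^ ((i.val : ℤ) * (k.val : ℤ)) : Kˣ) = β ^ k.val := by
      intro k
      rw [hβ, ← pow_mul, ← zpow_natCast α (i.val * k.val)]
      norm_cast
    have hexp' : ∀ k : ZMod N,
        (α⁻¹ ^ ((i.val : ℤ) * (k.val : ℤ)) : Kˣ) = (β⁻¹ : Kˣ) ^ k.val := by
      intro k
      rw [hβ, ← inv_pow, ← pow_mul, ← zpow_natCast α⁻¹ (i.val * k.val)]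
      norm_cast
    have hβN : β ^ N = 1 := by rw [hβ, ← pow_mul, mul_comm, pow_mul, hαN, one_pow]
    have hβiN : (β⁻¹) ^ N = 1 := by rw [inv_pow, hβN, inv_one]
    have hβ1 : β = 1 ↔ i = 0 := by
      rw [hβ, ← orderOf_dvd_iff_pow_eq_one, hα]
      constructor
      · intro h; exact (ZMod.val_eq_zero i).mp (Nat.eq_zero_of_dvd_of_lt h (ZMod.val_lt i))
      · intro h; simp [(ZMod.val_eq_zero i).mpr h]
    calc ∑ k : ZMod N, fcas α j (k.val : ℤ) (i.val : ℤ)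
        = ∑ k : ZMod N, ((1/2 + 1/(2*j)) * ((β:K)) ^ k.val
            + (1/2 - 1/(2*j)) * (((β⁻¹:Kˣ):K)) ^ k.val) := by
          refine Finset.sum_congr rfl fun k _ => ?_
          rw [fcas_eq' α j hj0 h2, hexp k, hexp' k]
          push_cast
          ring
      _ = (1/2 + 1/(2*j)) * (∑ k : ZMod N, ((β:K)) ^ k.val)
            + (1/2 - 1/(2*j)) * (∑ k : ZMod N, (((β⁻¹:Kˣ):K)) ^ k.val) := by
          rw [Finset.sum_add_distrib, Finset.mul_sum, Finset.mul_sum]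
      _ = if i = 0 then (N:K) else 0 := by
          rw [sum_pow_val' β N hβN, sum_pow_val' β⁻¹ N hβiN]
          have hio : β⁻¹ = 1 ↔ β = 1 := by
            constructor <;> intro h <;> simpa using congrArg (·⁻¹) h
          simp only [hio, hβ1]
          by_cases h : i = 0
          · rw [if_pos h]; field_simp; ring
          · simp [h]
  have key : ∑ k : ZMod N, V k = v 0 * N := by
    calc ∑ k : ZMod N, V k
        = ∑ k : ZMod N, ∑ i : ZMod N, v i * fcas α j (k.val : ℤ) (i.val : ℤ) := by
          refine Finset.sum_congr rfl fun k _ => ?_; rw [hV k, ffht]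
      _ = ∑ i : ZMod N, ∑ k : ZMod N, v i * fcas α j (k.val : ℤ) (i.val : ℤ) :=
          Finset.sum_comm
      _ = ∑ i : ZMod N, v i * (if i = 0 then (N:K) else 0) := by
          refine Finset.sum_congr rfl fun i _ => ?_
          rw [← Finset.mul_sum, hsum i]
      _ = v 0 * N := by
          rw [Finset.sum_eq_single 0] <;> simp (config := {contextual := true})
  rw [key]
  field_simp
end

section
/- Symmetry / double transform property (H5): if g = (g_0, …, g_{N−1}) has entries in K and G is its FFHT, then the FFHT of G equals N·g; that is, for every index i, ∑_{k=0}^{N−1} G_k·cas_i(k) = (N : K)·g_i. -/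
open scoped BigOperators

/-! Since `j⁻¹ = -j`, `cas_k(i) = ((1 - j) α^{ik} + (1 + j) α^{-ik}) / 2`. In the product
`cas_k(m) cas_i(k)` the terms `α^{±(m+i)k}` carry the coefficients `∓j/2` and the terms `α^{±(m-i)k}`
the coefficient `1/2`. Summing over `k`, the geometric sums `∑_k α^{nk} = N·[N ∣ n]` cancel the first
pair and leave `N·[m = i]`: the cas vectors are orthogonal, so transforming twice multiplies by `N`. -/

theorem ZMod.sum_val_eq_sum_range {M : Type*} [AddCommMonoid M] {N : ℕ} [NeZero N] (f : ℕ → M) :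
    ∑ k : ZMod N, f k.val = ∑ k ∈ Finset.range N, f k := by
  obtain ⟨n, rfl⟩ := Nat.exists_eq_succ_of_ne_zero (NeZero.ne N)
  exact Fin.sum_univ_eq_sum_range f (n + 1)

section
variable {K : Type*} [Field K]

theorem sum_zpow_mul_val_eq_ite {α : Kˣ} {N : ℕ} [NeZero N] (hα : orderOf α = N) (n : ℤ) :
    ∑ k : ZMod N, (α : K) ^ (n * k.val) = if (N : ℤ) ∣ n then (N : K) else 0 := by
  have hpow : ∀ k : ℕ, (α : K) ^ (n * k) = ((α ^ n : Kˣ) : K) ^ k := fun k => by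
    rw [Units.val_zpow_eq_zpow_val, zpow_mul, zpow_natCast]
  simp only [hpow, ZMod.sum_val_eq_sum_range]
  by_cases hdvd : (N : ℤ) ∣ n
  · rw [← hα, orderOf_dvd_iff_zpow_eq_one] at hdvd
    simp [hdvd, ← hα, orderOf_dvd_iff_zpow_eq_one]
  · have hne : ((α ^ n : Kˣ) : K) ≠ 1 := by
      rwa [Ne, Units.val_eq_one, ← orderOf_dvd_iff_zpow_eq_one, hα]
    have hN : ((α ^ n : Kˣ) : K) ^ N = 1 := by
      rw [← Units.val_pow_eq_pow_val, ← zpow_natCast, ← zpow_mul, mul_comm, zpow_mul, zpow_natCast,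
        ← hα, pow_orderOf_eq_one, one_zpow, Units.val_one]
    rw [geom_sum_eq hne, hN, sub_self, zero_div, if_neg hdvd]

theorem fcas_eq_of_sq_eq_neg_one {j : K} (hj : j ^ 2 = -1) (α : Kˣ) (k i : ℤ) :
    fcas α j k i = ((1 - j) * (α : K) ^ (i * k) + (1 + j) * (α : K) ^ (-(i * k))) / 2 := by
  have hj_inv : j⁻¹ = -j := inv_eq_of_mul_eq_one_right (by linear_combination -hj)
  rw [fcas, fcos, fsin, Units.val_zpow_eq_zpow_val, Units.val_zpow_eq_zpow_val,
    Units.val_inv_eq_inv_val, inv_zpow', div_eq_mul_inv _ (2 * j), mul_inv, hj_inv]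
  ring

theorem fcas_mul_fcas [NeZero (2 : K)] {j : K} (hj : j ^ 2 = -1) (α : Kˣ) (k m i : ℤ) :
    fcas α j k m * fcas α j i k =
      j / 2 * ((α : K) ^ (-(m + i) * k) - (α : K) ^ ((m + i) * k))
        + ((α : K) ^ ((m - i) * k) / 2 + (α : K) ^ (-(m - i) * k) / 2) := by
  have hx : (α : K) ≠ 0 := α.ne_zero
  rw [fcas_eq_of_sq_eq_neg_one hj, fcas_eq_of_sq_eq_neg_one hj]
  simp only [add_mul, sub_mul, neg_add, neg_sub, neg_mul, zpow_add₀ hx, zpow_sub₀ hx, zpow_neg,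
    mul_comm k]
  set a := (α : K) ^ (m * k)
  set b := (α : K) ^ (i * k)
  have ha : a ≠ 0 := zpow_ne_zero _ hx
  have hb : b ≠ 0 := zpow_ne_zero _ hx
  field_simp
  linear_combination (a ^ 2 * b ^ 2 - a ^ 2 - b ^ 2 + 1) * hj

theorem sum_fcas_mul_fcas [NeZero (2 : K)] {j : K} (hj : j ^ 2 = -1) {α : Kˣ} {N : ℕ} [NeZero N]
    (hα : orderOf α = N) (m i : ZMod N) :
    ∑ k : ZMod N, fcas α j k.val m.val * fcas α j i.val k.val = if m = i then (N : K) else 0 := by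
  have hdvd : (N : ℤ) ∣ (m.val : ℤ) - i.val ↔ m = i := by
    rw [← ZMod.intCast_eq_intCast_iff_dvd_sub]
    simp [eq_comm]
  simp only [fcas_mul_fcas hj, Finset.sum_add_distrib, ← Finset.mul_sum, ← Finset.sum_div,
    Finset.sum_sub_distrib, sum_zpow_mul_val_eq_ite hα, dvd_neg, hdvd, sub_self, mul_zero, zero_add,
    add_halves]

theorem ffht_ffht [NeZero (2 : K)] {j : K} (hj : j ^ 2 = -1) {α : Kˣ} {N : ℕ} [NeZero N]
    (hα : orderOf α = N) (v : ZMod N → K) (i : ZMod N) :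
    ffht α j (ffht α j v) i = N * v i := by
  simp only [ffht, Finset.sum_mul, mul_assoc]
  rw [Finset.sum_comm]
  simp only [← Finset.mul_sum, sum_fcas_mul_fcas hj hα]
  simp [mul_comm]

end

theorem ffht_double_transform_general (p : ℕ) (hpodd : Odd p)
    (K : Type*) [Field K] [CharP K p] (j : K) (hj : j ^ 2 = -1)
    (α : Kˣ) (N : ℕ) [NeZero N] (hα : orderOf α = N)
    (g G : ZMod N → K) (hG : ∀ k, G k = ffht α j g k) (i : ZMod N) :
    (∑ k : ZMod N, G k * fcas α j (i.val : ℤ) (k.val : ℤ)) = (N : K) * g i := by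
  have : NeZero (2 : K) := ⟨Ring.two_ne_zero <| by
    rw [ringChar.eq K p]
    rintro rfl
    exact Nat.not_odd_iff_even.mpr even_two hpodd⟩
  obtain rfl : G = ffht α j g := funext hG
  exact ffht_ffht hj hα g i

/-- H5, symmetry: the FFHT of the FFHT of `g` is `N·g`:
`∑_{k=0}^{N-1} G_k · cas_i(k) = N·g_i`. -/
theorem ffht_double_transform (p : ℕ) (hp : p.Prime) (hpodd : Odd p)
    (K : Type*) [Field K] [CharP K p] (j : K) (hj : j ^ 2 = -1)
    (α : Kˣ) (N : ℕ) [NeZero N] (hα : orderOf α = N)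
    (g G : ZMod N → K) (hG : ∀ k, G k = ffht α j g k) (i : ZMod N) :
    (∑ k : ZMod N, G k * fcas α j (i.val : ℤ) (k.val : ℤ)) = (N : K) * g i :=
  ffht_double_transform_general p hpodd K j hj α N hα g G hG i
end
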